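/- Let K ≥ 1, let w : Fin K → ℝ be nonnegative weights with ∑_i w_i = 1, let μ : Fin K → ℝ, and let v : Fin K → ℝ with v_i > 0 for all i. Then the squared mixture-of-Gaussians density integrates to ∫_ℝ ( ∑_{i} w_i·N(x; μ_i, v_i) )² dx = ∑_{i} ∑_{j} w_i·w_j·N(μ_i; μ_j, v_i + v_j), and consequently the Tsallis entropy of the mixture density π(x) = ∑_i w_i·N(x; μ_i, v_i), namely (1/2)·(1 − ∫_ℝ π(x)² dx), equals (1/2)·(1 − ∑_{i}∑_{j} w_i·w_j·N(μ_i; μ_j, v_i + v_j)). (Theorem 7 of the paper, univariate case: the Tsallis entropy of a mixture density network has an analytic form.) -/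

import Mathlib

open MeasureTheory Finset

/-!
The product of two Gaussian densities in `x` is again a Gaussian density in `x`, scaled by the
constant `N(μ₁; μ₂, v₁ + v₂)` (complete the square in the exponent). Expanding the square of the
mixture into the double sum of such products and integrating term by term gives the formula.
-/

/-- The univariate Gaussian density `N(x; μ, v) = (2πv)^{-1/2}·exp(−(x−μ)²/(2v))`. -/
noncomputable def gaussPdf (μ v x : ℝ) : ℝ :=
  (Real.sqrt (2 * Real.pi * v))⁻¹ * Real.exp (-((x - μ) ^ 2) / (2 * v))

lemma gaussPdf_eq_mul_exp_neg_mul_sq (μ v x : ℝ) :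
    gaussPdf μ v x = (Real.sqrt (2 * Real.pi * v))⁻¹ * Real.exp (-(1 / (2 * v)) * (x - μ) ^ 2) := by
  rw [gaussPdf, neg_mul, neg_div, one_div_mul_eq_div]

lemma integrable_gaussPdf (μ : ℝ) {v : ℝ} (hv : 0 < v) : Integrable (gaussPdf μ v) := by
  simp_rw [funext (gaussPdf_eq_mul_exp_neg_mul_sq μ v)]
  exact ((integrable_exp_neg_mul_sq (by positivity)).comp_sub_right μ).const_mul _

lemma integral_gaussPdf (μ : ℝ) {v : ℝ} (hv : 0 < v) : ∫ x, gaussPdf μ v x = 1 := by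
  simp_rw [gaussPdf_eq_mul_exp_neg_mul_sq]
  rw [integral_const_mul, integral_sub_right_eq_self (fun x => Real.exp (-(1 / (2 * v)) * x ^ 2)),
    integral_gaussian, show Real.pi / (1 / (2 * v)) = 2 * Real.pi * v by field_simp,
    inv_mul_cancel₀ (by positivity)]

lemma gaussPdf_mul_gaussPdf (μ₁ μ₂ : ℝ) {v₁ v₂ : ℝ} (h₁ : 0 < v₁) (h₂ : 0 < v₂) (x : ℝ) :
    gaussPdf μ₁ v₁ x * gaussPdf μ₂ v₂ x
      = gaussPdf μ₂ (v₁ + v₂) μ₁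
        * gaussPdf ((μ₁ * v₂ + μ₂ * v₁) / (v₁ + v₂)) (v₁ * v₂ / (v₁ + v₂)) x := by
  simp only [gaussPdf]
  rw [mul_mul_mul_comm, mul_mul_mul_comm _ (Real.exp _), ← Real.exp_add, ← Real.exp_add,
    ← mul_inv, ← mul_inv, ← Real.sqrt_mul (by positivity), ← Real.sqrt_mul (by positivity)]
  congr 2
  · field_simp
  · field_simp
    ring

lemma integral_gaussPdf_mul_gaussPdf (μ₁ μ₂ : ℝ) {v₁ v₂ : ℝ} (h₁ : 0 < v₁) (h₂ : 0 < v₂) :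
    Integrable (fun x => gaussPdf μ₁ v₁ x * gaussPdf μ₂ v₂ x) ∧
      ∫ x, gaussPdf μ₁ v₁ x * gaussPdf μ₂ v₂ x = gaussPdf μ₂ (v₁ + v₂) μ₁ := by
  have hv : 0 < v₁ * v₂ / (v₁ + v₂) := by positivity
  simp_rw [gaussPdf_mul_gaussPdf μ₁ μ₂ h₁ h₂]
  exact ⟨(integrable_gaussPdf _ hv).const_mul _,
    by rw [integral_const_mul, integral_gaussPdf _ hv, mul_one]⟩

theorem integral_sq_sum_mul_gaussPdf {ι : Type*} [Fintype ι] (w μ v : ι → ℝ)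
    (hv : ∀ i, 0 < v i) :
    ∫ x, (∑ i, w i * gaussPdf (μ i) (v i) x) ^ 2
      = ∑ i, ∑ j, w i * w j * gaussPdf (μ j) (v i + v j) (μ i) := by
  have hprod := fun i j => integral_gaussPdf_mul_gaussPdf (μ i) (μ j) (hv i) (hv j)
  have hexpand : ∀ x, (∑ i, w i * gaussPdf (μ i) (v i) x) ^ 2
      = ∑ i, ∑ j, w i * w j * (gaussPdf (μ i) (v i) x * gaussPdf (μ j) (v j) x) := by
    intro x
    rw [sq, sum_mul_sum]
    refine sum_congr rfl fun i _ => sum_congr rfl fun j _ => by ring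
  simp_rw [hexpand]
  rw [integral_finsetSum _ fun i _ =>
    integrable_finsetSum _ fun j _ => (hprod i j).1.const_mul _]
  refine sum_congr rfl fun i _ => ?_
  rw [integral_finsetSum _ fun j _ => (hprod i j).1.const_mul _]
  exact sum_congr rfl fun j _ => by rw [integral_const_mul, (hprod i j).2]

theorem stmt16_general (K : ℕ)
    (w : Fin K → ℝ)
    (μ : Fin K → ℝ) (v : Fin K → ℝ) (hv : ∀ i, 0 < v i) :
    (∫ x : ℝ, (∑ i, w i * gaussPdf (μ i) (v i) x) ^ 2
        = ∑ i, ∑ j, w i * w j * gaussPdf (μ j) (v i + v j) (μ i)) ∧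
    ((1 / 2) * (1 - ∫ x : ℝ, (∑ i, w i * gaussPdf (μ i) (v i) x) ^ 2)
        = (1 / 2) * (1 - ∑ i, ∑ j, w i * w j * gaussPdf (μ j) (v i + v j) (μ i))) := by
  have hsq := integral_sq_sum_mul_gaussPdf w μ v hv
  exact ⟨hsq, by rw [hsq]⟩

/-- Theorem 7 (univariate case): the squared mixture-of-Gaussians density
integrates to `∑ᵢ∑ⱼ wᵢwⱼ·N(μᵢ; μⱼ, vᵢ + vⱼ)`, hence the Tsallis entropy of a
mixture density has the analytic form
`(1/2)·(1 − ∑ᵢ∑ⱼ wᵢwⱼ·N(μᵢ; μⱼ, vᵢ + vⱼ))`. -/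
theorem stmt16 (K : ℕ) (hK : 1 ≤ K)
    (w : Fin K → ℝ) (hw0 : ∀ i, 0 ≤ w i) (hw1 : ∑ i, w i = 1)
    (μ : Fin K → ℝ) (v : Fin K → ℝ) (hv : ∀ i, 0 < v i) :
    (∫ x : ℝ, (∑ i, w i * gaussPdf (μ i) (v i) x) ^ 2
        = ∑ i, ∑ j, w i * w j * gaussPdf (μ j) (v i + v j) (μ i)) ∧
    ((1 / 2) * (1 - ∫ x : ℝ, (∑ i, w i * gaussPdf (μ i) (v i) x) ^ 2)
        = (1 / 2) * (1 - ∑ i, ∑ j, w i * w j * gaussPdf (μ j) (v i + v j) (μ i))) :=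
  stmt16_general K w μ v hv
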